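/- Suppose φ(X_1),...,φ(X_N) are linearly independent elements of a Hilbert space, λ > 0, and the attention-parameterized vector β = Σ_j (v_j/h(X_j))φ(X_j) globally minimizes the penalized hinge loss (λ/2)‖β‖² + Σ_i [1 − W_i(⟨β,φ(X_i)⟩+β₀)]₊. Let α* be the optimal solution of the corresponding dual SVM. Then for every j, λv_j/h(X_j) = α*_j W_j, i.e., the optimal balancing weight can be read off as α*_j = λ v_j/(h(X_j) W_j). -/

import Mathlib

/-!
Write `c j = v j / h j`, `β = ∑ j, c j • x j` and `α j = lam * c j * W j`. Perturbing the primal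
minimiser along directions `d` whose inner products `⟪d, x i⟫` are prescribed (possible by linear
independence, through the invertible Gram matrix) gives the KKT conditions: `∑ j, W j * α j = 0`,
`α j ∈ [0, 1]`, and complementary slackness `α j * (1 - m j) = max 0 (1 - m j)` for the margins
`m j`. So `α` is dual feasible, and expanding the dual objective around `α` shows that every
feasible `γ` exceeds it by at least `‖∑ i, (γ i * W i) • x i - lam • β‖ ^ 2`. Hence the dual
optimum `αs` has the weight vector `lam • β`, and linear independence compares coefficients.
-/

open RealInnerProductSpace Filter Topology

theorem LinearIndependent.exists_inner_eq {H ι : Type*} [NormedAddCommGroup H]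
    [InnerProductSpace ℝ H] [Fintype ι] {x : ι → H} (hx : LinearIndependent ℝ x)
    (w : ι → ℝ) : ∃ d : H, ∀ i, ⟪d, x i⟫ = w i := by
  classical
  have hG : IsUnit (Matrix.gram ℝ x).det :=
    (Matrix.isUnit_iff_isUnit_det _).mp (Matrix.posDef_gram_of_linearIndependent hx).isUnit
  set c := ((Matrix.gram ℝ x)⁻¹).mulVec w
  refine ⟨∑ j, c j • x j, fun i => ?_⟩
  have hc : (Matrix.gram ℝ x).mulVec c = w := by
    rw [Matrix.mulVec_mulVec, Matrix.mul_nonsing_inv _ hG, Matrix.one_mulVec]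
  rw [real_inner_comm, ← hc, inner_sum]
  simp only [Matrix.mulVec, dotProduct, Matrix.gram_apply, real_inner_smul_right, mul_comm]

theorem nonneg_of_forall_nonneg_mul_add_sq {p q ε : ℝ} (hε : 0 < ε)
    (h : ∀ t, 0 < t → t < ε → 0 ≤ p * t + q * t ^ 2) : 0 ≤ p := by
  have hev : ∀ᶠ t in 𝓝[>] (0 : ℝ), 0 ≤ p + q * t := by
    filter_upwards [Ioo_mem_nhdsGT hε] with t ht
    have := h t ht.1 ht.2
    nlinarith [ht.1]
  have hlim : Tendsto (fun t => p + q * t) (𝓝[>] (0 : ℝ)) (𝓝 p) := by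
    have : Continuous (fun t : ℝ => p + q * t) := by fun_prop
    simpa using (this.tendsto 0).mono_left nhdsWithin_le_nhds
  exact ge_of_tendsto hlim hev

theorem eq_zero_of_forall_nonneg_mul_add_sq {p q : ℝ} (h : ∀ t, 0 ≤ p * t + q * t ^ 2) :
    p = 0 := by
  have h₁ := nonneg_of_forall_nonneg_mul_add_sq one_pos fun t _ _ => h t
  have h₂ := nonneg_of_forall_nonneg_mul_add_sq (p := -p) (q := q) one_pos fun t _ _ => by
    linarith [h (-t)]
  linarith

/-- The conclusion says that `a` is a subgradient of `max 0` at `c`. -/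
theorem mem_Icc_and_mul_eq_max_zero_of_forall_nonneg {a q c : ℝ}
    (h : ∀ t, 0 ≤ a * t + q * t ^ 2 + (max 0 (c - t) - max 0 c)) :
    a ∈ Set.Icc 0 1 ∧ a * c = max 0 c := by
  have hright {ε p : ℝ} (hε : 0 < ε)
      (hp : ∀ t, 0 < t → t < ε → max 0 (c - t) - max 0 c = p * t) : 0 ≤ a + p :=
    nonneg_of_forall_nonneg_mul_add_sq (q := q) hε fun t ht htε => by
      have := h t; rw [hp t ht htε] at this; linarith
  have hleft {ε p : ℝ} (hε : 0 < ε)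
      (hp : ∀ t, 0 < t → t < ε → max 0 (c + t) - max 0 c = p * t) : 0 ≤ -a + p :=
    nonneg_of_forall_nonneg_mul_add_sq (q := q) hε fun t ht htε => by
      have := h (-t); rw [sub_neg_eq_add, hp t ht htε] at this; linarith
  rcases lt_trichotomy c 0 with hc | rfl | hc
  · have h₁ := hright (p := 0) (neg_pos.2 hc) fun t ht htε => by
      rw [max_eq_left (by linarith), max_eq_left hc.le]; ring
    have h₂ := hleft (p := 0) (neg_pos.2 hc) fun t ht htε => by
      rw [max_eq_left (by linarith), max_eq_left hc.le]; ring
    refine ⟨⟨by linarith, by linarith⟩, ?_⟩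
    rw [max_eq_left hc.le, show a = 0 by linarith, zero_mul]
  · have h₁ := hright (p := 0) one_pos fun t ht _ => by
      rw [max_eq_left (by linarith), max_self]; ring
    have h₂ := hleft (p := 1) one_pos fun t ht _ => by
      rw [max_eq_right (by linarith), max_self]; ring
    exact ⟨⟨by linarith, by linarith⟩, by simp⟩
  · have h₁ := hright (p := -1) hc fun t ht htε => by
      rw [max_eq_right (by linarith), max_eq_right hc.le]; ring
    have h₂ := hleft (p := 1) one_pos fun t ht _ => by
      rw [max_eq_right (by linarith), max_eq_right hc.le]; ring
    refine ⟨⟨by linarith, by linarith⟩, ?_⟩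
    rw [max_eq_right hc.le, show a = 1 by linarith, one_mul]

section SVM

variable {H : Type*} [NormedAddCommGroup H] [InnerProductSpace ℝ H] {ι : Type*} [Fintype ι]
  (lam : ℝ) (W : ι → ℝ) (x : ι → H)

noncomputable def svmPrimal (β : H) (b : ℝ) : ℝ :=
  lam / 2 * ‖β‖ ^ 2 + ∑ i, max 0 (1 - W i * (⟪β, x i⟫ + b))

/-- `-2 * lam` times the usual dual objective of the soft-margin SVM, so it is to be minimised. -/
def svmDual (α : ι → ℝ) : ℝ :=
  (∑ i, ∑ j, α i * (W i * W j * ⟪x i, x j⟫) * α j) - 2 * lam * ∑ i, α i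

theorem svmDual_eq (α : ι → ℝ) :
    svmDual lam W x α = ‖∑ i, (α i * W i) • x i‖ ^ 2 - 2 * lam * ∑ i, α i := by
  rw [svmDual, ← real_inner_self_eq_norm_sq, sum_inner]
  congr 1
  refine Finset.sum_congr rfl fun i _ => ?_
  rw [real_inner_smul_left, inner_sum, Finset.mul_sum]
  refine Finset.sum_congr rfl fun j _ => ?_
  rw [real_inner_smul_right]
  ring

omit [Fintype ι] in
theorem sum_inner_smul_left {s : Finset ι} (c : ι → ℝ) (d : H) :
    ⟪∑ j ∈ s, c j • x j, d⟫ = ∑ j ∈ s, c j * ⟪d, x j⟫ := by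
  rw [real_inner_comm, inner_sum]
  simp only [real_inner_smul_right]

theorem svmPrimal_add_smul_sub (β d : H) (b d₀ t : ℝ) :
    svmPrimal lam W x (β + t • d) (b + t * d₀) - svmPrimal lam W x β b
      = t * (lam * ⟪β, d⟫) + t ^ 2 * (lam / 2 * ‖d‖ ^ 2)
        + ∑ i, (max 0 (1 - W i * (⟪β, x i⟫ + b) - t * (W i * (⟪d, x i⟫ + d₀)))
          - max 0 (1 - W i * (⟪β, x i⟫ + b))) := by
  have hnorm : ‖β + t • d‖ ^ 2 = ‖β‖ ^ 2 + 2 * t * ⟪β, d⟫ + t ^ 2 * ‖d‖ ^ 2 := by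
    rw [norm_add_sq_real, real_inner_smul_right, norm_smul, mul_pow, Real.norm_eq_abs, sq_abs]
    ring
  have hmargin : ∀ i, 1 - W i * (⟪β + t • d, x i⟫ + (b + t * d₀))
      = 1 - W i * (⟪β, x i⟫ + b) - t * (W i * (⟪d, x i⟫ + d₀)) := fun i => by
    rw [inner_add_left, real_inner_smul_left]
    ring
  simp only [svmPrimal, hnorm, hmargin, Finset.sum_sub_distrib]
  ring

variable {lam W x}

theorem lam_mul_sum_eq_zero_of_svmPrimal_min (hx : LinearIndependent ℝ x) {c : ι → ℝ} {b : ℝ}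
    (hmin : ∀ β' b', svmPrimal lam W x (∑ j, c j • x j) b ≤ svmPrimal lam W x β' b') :
    lam * ∑ j, c j = 0 := by
  -- moving `β` by `t • d` and the offset by `t` leaves every margin unchanged
  obtain ⟨d, hd⟩ := hx.exists_inner_eq fun _ => -1
  have hβd : ⟪∑ j, c j • x j, d⟫ = -∑ j, c j := by
    simp [sum_inner_smul_left, hd]
  have h t : 0 ≤ -(lam * ∑ j, c j) * t + (lam / 2 * ‖d‖ ^ 2) * t ^ 2 := by
    have := svmPrimal_add_smul_sub lam W x (∑ j, c j • x j) d b 1 t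
    simp only [hd, hβd, neg_add_cancel, add_zero, mul_zero, sub_zero, sub_self,
      Finset.sum_const_zero] at this
    linarith [hmin (∑ j, c j • x j + t • d) (b + t * 1)]
  exact neg_eq_zero.mp (eq_zero_of_forall_nonneg_mul_add_sq h)

theorem mem_Icc_and_mul_eq_max_zero_of_svmPrimal_min (hx : LinearIndependent ℝ x)
    (hW : ∀ i, W i * W i = 1) {c : ι → ℝ} {b : ℝ}
    (hmin : ∀ β' b', svmPrimal lam W x (∑ j, c j • x j) b ≤ svmPrimal lam W x β' b') (k : ι) :
    lam * c k * W k ∈ Set.Icc 0 1 ∧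
      lam * c k * W k * (1 - W k * (⟪∑ j, c j • x j, x k⟫ + b))
        = max 0 (1 - W k * (⟪∑ j, c j • x j, x k⟫ + b)) := by
  classical
  set β := ∑ j, c j • x j
  -- moving `β` by `t • d` shifts the `k`-th margin by `t` and no other margin
  obtain ⟨d, hd⟩ := hx.exists_inner_eq (Pi.single k (W k))
  have hβd : ⟪β, d⟫ = c k * W k := by
    simp [β, sum_inner_smul_left, hd, Pi.single_apply]
  have hsum (t : ℝ) : ∑ i, (max 0 (1 - W i * (⟪β, x i⟫ + b) - t * (W i * (⟪d, x i⟫ + 0)))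
      - max 0 (1 - W i * (⟪β, x i⟫ + b)))
        = max 0 (1 - W k * (⟪β, x k⟫ + b) - t) - max 0 (1 - W k * (⟪β, x k⟫ + b)) := by
    rw [Fintype.sum_eq_single k fun i hi => by simp [hd, hi]]
    simp [hd, hW]
  refine mem_Icc_and_mul_eq_max_zero_of_forall_nonneg (q := lam / 2 * ‖d‖ ^ 2) fun t => ?_
  have := svmPrimal_add_smul_sub lam W x β d b 0 t
  rw [hsum, hβd] at this
  linarith [hmin (β + t • d) (b + t * 0)]

theorem svmDual_add_norm_sub_sq_le (hlam : 0 ≤ lam) {α γ : ι → ℝ} {β : H} {b : ℝ}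
    (hβ : ∑ i, (α i * W i) • x i = lam • β) (hα : ∑ i, W i * α i = 0)
    (hγ : ∑ i, W i * γ i = 0) (hγI : ∀ i, γ i ∈ Set.Icc 0 1)
    (hcs : ∀ i, α i * (1 - W i * (⟪β, x i⟫ + b)) = max 0 (1 - W i * (⟪β, x i⟫ + b))) :
    svmDual lam W x α + ‖∑ i, (γ i * W i) • x i - lam • β‖ ^ 2 ≤ svmDual lam W x γ := by
  set u := ∑ i, (γ i * W i) • x i
  have hdiff : u - lam • β = ∑ i, ((γ i - α i) * W i) • x i := by
    rw [← hβ, ← Finset.sum_sub_distrib]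
    simp only [sub_mul, sub_smul]
  have hterm (i : ι) :
      γ i - α i - b * (W i * γ i - W i * α i) ≤ (γ i - α i) * W i * ⟪β, x i⟫ := by
    have hmax : γ i * (1 - W i * (⟪β, x i⟫ + b)) ≤ max 0 (1 - W i * (⟪β, x i⟫ + b)) := by
      obtain ⟨h₀, h₁⟩ := hγI i
      rcases le_total 0 (1 - W i * (⟪β, x i⟫ + b)) with hc | hc
      · rw [max_eq_right hc]; nlinarith
      · rw [max_eq_left hc]; nlinarith
    linarith [hcs i]
  have hcross : lam * (∑ i, γ i - ∑ i, α i) ≤ ⟪lam • β, u - lam • β⟫ := by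
    have hsum : ∑ i, γ i - ∑ i, α i ≤ ⟪β, u - lam • β⟫ := by
      rw [hdiff, inner_sum]
      calc ∑ i, γ i - ∑ i, α i = ∑ i, (γ i - α i - b * (W i * γ i - W i * α i)) := by
            simp only [Finset.sum_sub_distrib, ← Finset.mul_sum, hα, hγ]
            ring
        _ ≤ ∑ i, ⟪β, ((γ i - α i) * W i) • x i⟫ := Finset.sum_le_sum fun i _ => by
            rw [real_inner_smul_right]
            exact hterm i
    rw [real_inner_smul_left]
    exact mul_le_mul_of_nonneg_left hsum hlam
  have hexp : ‖u‖ ^ 2 = ‖lam • β‖ ^ 2 + 2 * ⟪lam • β, u - lam • β⟫ + ‖u - lam • β‖ ^ 2 := by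
    rw [← norm_add_sq_real, add_sub_cancel]
  rw [svmDual_eq, svmDual_eq, hβ]
  linarith

end SVM

theorem stmt_9_general {H : Type*} [NormedAddCommGroup H] [InnerProductSpace ℝ H] {N : ℕ}
    (lam : ℝ) (hlam : 0 < lam) (W v h : Fin N → ℝ)
    (hW : ∀ j, W j = 1 ∨ W j = -1)
    (x : Fin N → H) (hli : LinearIndependent ℝ x) (β₀ : ℝ)
    -- β = ∑ⱼ (vⱼ/h(Xⱼ)) φ(Xⱼ) globally minimizes the penalized hinge loss
    (hmin : ∀ (β' : H) (β₀' : ℝ),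
      lam / 2 * ‖∑ j, (v j / h j) • x j‖ ^ 2
          + ∑ i, max 0 (1 - W i * (⟪∑ j, (v j / h j) • x j, x i⟫ + β₀))
        ≤ lam / 2 * ‖β'‖ ^ 2 + ∑ i, max 0 (1 - W i * (⟪β', x i⟫ + β₀')))
    -- α* is an optimal solution of the corresponding dual SVM
    (αs : Fin N → ℝ)
    (hfeas : (∑ i, W i * αs i = 0) ∧ ∀ i, 0 ≤ αs i ∧ αs i ≤ 1)
    (hopt : ∀ α : Fin N → ℝ, (∑ i, W i * α i = 0) → (∀ i, 0 ≤ α i ∧ α i ≤ 1) →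
      (∑ i, ∑ j, αs i * (W i * W j * ⟪x i, x j⟫) * αs j) - 2 * lam * ∑ i, αs i
        ≤ (∑ i, ∑ j, α i * (W i * W j * ⟪x i, x j⟫) * α j) - 2 * lam * ∑ i, α i) :
    ∀ j, lam * v j / h j = αs j * W j := by
  have hW2 (j : Fin N) : W j * W j = 1 := by rcases hW j with hj | hj <;> simp [hj]
  set c : Fin N → ℝ := fun j => v j / h j
  set β := ∑ j, c j • x j
  set α : Fin N → ℝ := fun j => lam * c j * W j
  have hcoef (j : Fin N) : α j * W j = lam * c j := by simp only [α, mul_assoc, hW2, mul_one]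
  have hkkt := mem_Icc_and_mul_eq_max_zero_of_svmPrimal_min hli hW2 hmin
  have hαW : ∑ j, W j * α j = 0 := by
    simpa only [mul_comm (W _), hcoef, Finset.mul_sum] using
      lam_mul_sum_eq_zero_of_svmPrimal_min hli hmin
  have hαβ : ∑ j, (α j * W j) • x j = lam • β := by
    simp only [hcoef, β, Finset.smul_sum, smul_smul]
  have hdual := svmDual_add_norm_sub_sq_le hlam.le hαβ hαW hfeas.1 hfeas.2 fun i => (hkkt i).2
  have hαs_opt : svmDual lam W x αs ≤ svmDual lam W x α := hopt α hαW fun i => (hkkt i).1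
  have hαs : ∑ j, (αs j * W j) • x j = ∑ j, (α j * W j) • x j := by
    rw [hαβ, ← sub_eq_zero, ← norm_eq_zero, ← sq_eq_zero_iff]
    exact le_antisymm (by linarith) (sq_nonneg _)
  intro j
  rw [mul_div_assoc, ← hcoef]
  exact (Fintype.linearIndependent_iffₛ.mp hli _ _ hαs j).symm

/-- if `φ(X_1), ..., φ(X_N)` are linearly independent, `λ > 0`, and the
attention-parameterized vector `β = ∑ⱼ (vⱼ/h(Xⱼ)) φ(Xⱼ)` globally minimizes the penalized
hinge loss, then the optimal dual SVM solution `α*` satisfies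
`λ vⱼ / h(Xⱼ) = α*ⱼ Wⱼ` for every `j`. -/
theorem stmt_9 {H : Type*} [NormedAddCommGroup H] [InnerProductSpace ℝ H] {N : ℕ}
    (lam : ℝ) (hlam : 0 < lam) (W v h : Fin N → ℝ)
    (hW : ∀ j, W j = 1 ∨ W j = -1) (hh : ∀ j, 0 < h j)
    (x : Fin N → H) (hli : LinearIndependent ℝ x) (β₀ : ℝ)
    -- β = ∑ⱼ (vⱼ/h(Xⱼ)) φ(Xⱼ) globally minimizes the penalized hinge loss
    (hmin : ∀ (β' : H) (β₀' : ℝ),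
      lam / 2 * ‖∑ j, (v j / h j) • x j‖ ^ 2
          + ∑ i, max 0 (1 - W i * (⟪∑ j, (v j / h j) • x j, x i⟫ + β₀))
        ≤ lam / 2 * ‖β'‖ ^ 2 + ∑ i, max 0 (1 - W i * (⟪β', x i⟫ + β₀')))
    -- α* is an optimal solution of the corresponding dual SVM
    (αs : Fin N → ℝ)
    (hfeas : (∑ i, W i * αs i = 0) ∧ ∀ i, 0 ≤ αs i ∧ αs i ≤ 1)
    (hopt : ∀ α : Fin N → ℝ, (∑ i, W i * α i = 0) → (∀ i, 0 ≤ α i ∧ α i ≤ 1) →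
      (∑ i, ∑ j, αs i * (W i * W j * ⟪x i, x j⟫) * αs j) - 2 * lam * ∑ i, αs i
        ≤ (∑ i, ∑ j, α i * (W i * W j * ⟪x i, x j⟫) * α j) - 2 * lam * ∑ i, α i) :
    ∀ j, lam * v j / h j = αs j * W j :=
  stmt_9_general lam hlam W v h hW x hli β₀ hmin αs hfeas hopt
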